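/- Let p and t be real numbers. Define S_0(t) = 1 and S_n(t) = (1/n) Σ_{k=1}^{n} (−1)^{k+1} B_k(t) S_{n−k}(t) for n ≥ 1, and define G_0(p,t) = 1 and G_n(p,t) = (p/n) Σ_{k=1}^{n} (−1)^{k+1} B_k(t) G_{n−k}(p,t) for n ≥ 1. Then for every n ≥ 1, the sequence G also satisfies the recursion G_n(p,t) = (1/n) Σ_{k=1}^{n} [k(1+p) − n] S_k(t) G_{n−k}(p,t); i.e., the two recursions produce the same sequence of coefficients. -/

import Mathlib

open Finset

/-- The `k`-th Bernoulli polynomial evaluated at a real number `t`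
(generating function `u e^{tu}/(e^u - 1)`, so `B 1 t = t - 1/2`). -/
noncomputable def bern (k : ℕ) (t : ℝ) : ℝ :=
  Polynomial.aeval t (Polynomial.bernoulli k)

/-!
Let `β = ∑_{k ≥ 1} (-1)^{k+1} B_k(t) X^k` and let `θ = X d/dX` be the Euler operator, which
multiplies the coefficient of `X^n` by `n`. For the generating series of `S` and `G` the two
recursions read `θ S = β S` and `θ G = p β G`, so the Leibniz rule gives
`θ (S G) = (1 + p) (θ S) G`. Comparing coefficients of `X^n` yields
`∑_{k=0}^n (k(1+p) - n) S_k G_{n-k} = 0`, whose `k = 0` term is `-n G_n`.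
-/

open PowerSeries

theorem Finset.sum_range_succ_eq_add_sum_Icc {M : Type*} [AddCommMonoid M] (f : ℕ → M) (n : ℕ) :
    ∑ k ∈ range (n + 1), f k = f 0 + ∑ k ∈ Icc 1 n, f k := by
  rw [sum_range_eq_add_Ico f (by omega : 0 < n + 1), Ico_add_one_right_eq_Icc]

namespace PowerSeries

section CommSemiring

variable {R : Type*} [CommSemiring R]

theorem coeff_X_mul_derivative (f : R⟦X⟧) (n : ℕ) :
    coeff n (X * d⁄dX R f) = n * coeff n f := by
  cases n with
  | zero => simp
  | succ m => rw [coeff_succ_X_mul, coeff_derivative, mul_comm]; push_cast; rfl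

theorem coeff_X_mul_derivative_mul (f g : R⟦X⟧) (n : ℕ) :
    coeff n (X * d⁄dX R f * g) = ∑ k ∈ range (n + 1), k * coeff k f * coeff (n - k) g := by
  rw [coeff_mul, Nat.sum_antidiagonal_eq_sum_range_succ_mk]
  simp only [coeff_X_mul_derivative]

theorem X_mul_derivative_mul_of_eq {f g β : R⟦X⟧} {c : R}
    (hf : X * d⁄dX R f = β * f) (hg : X * d⁄dX R g = c • (β * g)) :
    X * d⁄dX R (f * g) = (1 + c) • (X * d⁄dX R f * g) := by
  calc X * d⁄dX R (f * g) = f * (X * d⁄dX R g) + X * d⁄dX R f * g := by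
        rw [Derivation.leibniz, smul_eq_mul, smul_eq_mul]; ring
    _ = (1 + c) • (X * d⁄dX R f * g) := by
        rw [hg, hf, add_smul, one_smul, mul_smul_comm, mul_left_comm, add_comm, mul_assoc]

end CommSemiring

section CommRing

variable {R : Type*} [CommRing R]

theorem coeff_mk_sub_C_mul (b : ℕ → R) (g : R⟦X⟧) (n : ℕ) :
    coeff n ((mk b - C (b 0)) * g) = ∑ k ∈ Icc 1 n, b k * coeff (n - k) g := by
  rw [sub_mul, map_sub, coeff_mul, Nat.sum_antidiagonal_eq_sum_range_succ_mk,
    sum_range_succ_eq_add_sum_Icc, coeff_C_mul]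
  simp

theorem sum_Icc_coeff_mul_coeff_of_X_mul_derivative_mul {f g : R⟦X⟧} {c : R}
    (h : X * d⁄dX R (f * g) = (1 + c) • (X * d⁄dX R f * g)) (n : ℕ) :
    ∑ k ∈ Icc 1 n, (k * (1 + c) - n) * coeff k f * coeff (n - k) g =
      n * coeff 0 f * coeff n g := by
  have hsum : ∑ k ∈ range (n + 1), (k * (1 + c) - n) * coeff k f * coeff (n - k) g = 0 := by
    calc _ = (1 + c) * coeff n (X * d⁄dX R f * g) - coeff n (X * d⁄dX R (f * g)) := by
          rw [coeff_X_mul_derivative, coeff_X_mul_derivative_mul, coeff_mul,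
            Nat.sum_antidiagonal_eq_sum_range_succ_mk, mul_sum, mul_sum, ← sum_sub_distrib]
          exact sum_congr rfl fun k _ => by ring
      _ = 0 := by rw [h, coeff_smul, smul_eq_mul, sub_self]
  rw [sum_range_succ_eq_add_sum_Icc] at hsum
  simp only [Nat.cast_zero, zero_mul, zero_sub, Nat.sub_zero] at hsum
  linear_combination hsum

end CommRing

theorem X_mul_derivative_mk_eq_of_recursion {K : Type*} [Field K] [CharZero K] {a b : ℕ → K}
    (c : K) (h : ∀ n, 1 ≤ n → a n = c / n * ∑ k ∈ Icc 1 n, b k * a (n - k)) :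
    X * d⁄dX K (mk a) = c • ((mk b - C (b 0)) * mk a) := by
  ext n
  rw [coeff_X_mul_derivative, coeff_smul, coeff_mk_sub_C_mul, smul_eq_mul]
  simp only [coeff_mk]
  rcases Nat.eq_zero_or_pos n with rfl | hn
  · simp
  · have hn0 : (n : K) ≠ 0 := by exact_mod_cast hn.ne'
    rw [h n hn]
    field_simp

end PowerSeries

theorem G_satisfies_S_recursion_general
    (p t : ℝ)
    (S : ℕ → ℝ) (hS0 : S 0 = 1)
    (hS : ∀ n : ℕ, 1 ≤ n →
      S n = (1 / (n : ℝ)) *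
        ∑ k ∈ Finset.Icc 1 n, (-1 : ℝ) ^ (k + 1) * bern k t * S (n - k))
    (G : ℕ → ℝ)
    (hG : ∀ n : ℕ, 1 ≤ n →
      G n = (p / (n : ℝ)) *
        ∑ k ∈ Finset.Icc 1 n, (-1 : ℝ) ^ (k + 1) * bern k t * G (n - k)) :
    ∀ n : ℕ, 1 ≤ n →
      G n = (1 / (n : ℝ)) *
        ∑ k ∈ Finset.Icc 1 n, ((k : ℝ) * (1 + p) - (n : ℝ)) * S k * G (n - k) := by
  intro n hn
  have hS' := X_mul_derivative_mk_eq_of_recursion 1 hS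
  have hG' := X_mul_derivative_mk_eq_of_recursion p hG
  rw [one_smul] at hS'
  have h := sum_Icc_coeff_mul_coeff_of_X_mul_derivative_mul (X_mul_derivative_mul_of_eq hS' hG') n
  simp only [coeff_mk, hS0] at h
  have hn0 : (n : ℝ) ≠ 0 := by exact_mod_cast (by omega : n ≠ 0)
  rw [h]
  field_simp

/-- the sequence `Gₙ` defined by the Bernoulli recursion
`Gₙ = (p/n) ∑_{k=1}^n (-1)^{k+1} Bₖ(t) G_{n-k}` also satisfies the recursion
`Gₙ = (1/n) ∑_{k=1}^n [k(1+p) - n] Sₖ(t) G_{n-k}`. -/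
theorem G_satisfies_S_recursion
    (p t : ℝ)
    (S : ℕ → ℝ) (hS0 : S 0 = 1)
    (hS : ∀ n : ℕ, 1 ≤ n →
      S n = (1 / (n : ℝ)) *
        ∑ k ∈ Finset.Icc 1 n, (-1 : ℝ) ^ (k + 1) * bern k t * S (n - k))
    (G : ℕ → ℝ) (hG0 : G 0 = 1)
    (hG : ∀ n : ℕ, 1 ≤ n →
      G n = (p / (n : ℝ)) *
        ∑ k ∈ Finset.Icc 1 n, (-1 : ℝ) ^ (k + 1) * bern k t * G (n - k)) :
    ∀ n : ℕ, 1 ≤ n →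
      G n = (1 / (n : ℝ)) *
        ∑ k ∈ Finset.Icc 1 n, ((k : ℝ) * (1 + p) - (n : ℝ)) * S k * G (n - k) :=
  G_satisfies_S_recursion_general p t S hS0 hS G hG
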